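/- arXiv:1609.03710 — 2 statements merged into one kernel-verified Lean document; each statement's English description precedes it below -/
import Mathlib

section
/- Let K be a field, n a positive integer, R = K[x_1,…,x_{2n}], and let a, b, c, d be four pairwise distinct elements of {1,…,n}. Writing f_{pq} = x_p·x_{n+q} − x_q·x_{n+p}, the square (f_{ad})^2 belongs to the ideal of R generated by the three polynomials f_{ab}, f_{ac}, and f_{ad} + f_{bc}. -/
open MvPolynomial

/-- `f_{pq} = x_p · x_{n+q} − x_q · x_{n+p}` in `K[x_1,…,x_{2n}]`, where the first `n`
variables are indexed by `Fin.castAdd n` and the last `n` variables by `Fin.natAdd n`. -/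
noncomputable def edgeBinomial (K : Type*) [Field K] (n : ℕ) (p q : Fin n) :
    MvPolynomial (Fin (n + n)) K :=
  X (Fin.castAdd n p) * X (Fin.natAdd n q) - X (Fin.castAdd n q) * X (Fin.natAdd n p)

theorem stmt_15 (K : Type*) [Field K] (n : ℕ) (hn : 0 < n) (a b c d : Fin n)
    (hab : a ≠ b) (hac : a ≠ c) (had : a ≠ d) (hbc : b ≠ c) (hbd : b ≠ d) (hcd : c ≠ d) :
    (edgeBinomial K n a d) ^ 2 ∈
      Ideal.span {edgeBinomial K n a b, edgeBinomial K n a c,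
        edgeBinomial K n a d + edgeBinomial K n b c} := by
  have h : (edgeBinomial K n a d) ^ 2 =
      (edgeBinomial K n c d) * edgeBinomial K n a b
      + (-(edgeBinomial K n b d)) * edgeBinomial K n a c
      + edgeBinomial K n a d * (edgeBinomial K n a d + edgeBinomial K n b c) := by
    simp only [edgeBinomial]; ring
  rw [h]
  refine add_mem (add_mem ?_ ?_) ?_ <;>
    exact Ideal.mul_mem_left _ _ (Ideal.subset_span (by simp))
end

section
/- Let K be a field, n a positive integer, R = K[x_1,…,x_{2n}], and let a, b, c, d be four pairwise distinct elements of {1,…,n}. Writing f_{pq} = x_p·x_{n+q} − x_q·x_{n+p}, the square (f_{bc})^2 belongs to the ideal of R generated by the three polynomials f_{ab}, f_{ac}, and f_{ad} + f_{bc}. -/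
open MvPolynomial

theorem stmt_16 (K : Type*) [Field K] (n : ℕ) (hn : 0 < n) (a b c d : Fin n)
    (hab : a ≠ b) (hac : a ≠ c) (had : a ≠ d) (hbc : b ≠ c) (hbd : b ≠ d) (hcd : c ≠ d) :
    (edgeBinomial K n b c) ^ 2 ∈
      Ideal.span {edgeBinomial K n a b, edgeBinomial K n a c,
        edgeBinomial K n a d + edgeBinomial K n b c} := by
  have key : (edgeBinomial K n b c) ^ 2 =
      edgeBinomial K n c d * edgeBinomial K n a b
      + (-(edgeBinomial K n b d)) * edgeBinomial K n a c
      + edgeBinomial K n b c * (edgeBinomial K n a d + edgeBinomial K n b c) := by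
    simp only [edgeBinomial]; ring
  rw [key]
  refine add_mem (add_mem ?_ ?_) ?_ <;>
    exact Ideal.mul_mem_left _ _ (Ideal.subset_span (by simp))
end
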